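/- Let 𝒮 be a triangulated category with an object G such that 𝒮 = ⟨G⟩_{n+1} for some n ∈ ℕ (G is a strong generator) and Hom_𝒮(G[i], G) = 0 for all i ≥ d+1, where d ∈ ℕ. Then fd(𝒮, G) ≤ n(d+1) < ∞; that is, every object F of 𝒮 with Hom(G[j], F) = 0 for all j ≥ 1 lies in ⟨G⟩_{n+1}^{[-n(d+1),∞)} ⊆ ⟨G⟩^{[0,∞)}[n(d+1)]. -/

import Mathlib

open CategoryTheory Limits Pretriangulated

universe v u

namespace Paper

variable (C : Type u) [Category.{v} C] [HasZeroObject C] [HasShift C ℤ]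
  [Preadditive C] [∀ n : ℤ, (shiftFunctor C n).Additive] [Pretriangulated C]

/-- `Z` is a direct sum of `X` and `Y`. -/
def IsDirSum {C : Type u} [Category.{v} C] [Preadditive C] (Z X Y : C) : Prop :=
  ∃ (i₁ : X ⟶ Z) (i₂ : Y ⟶ Z) (p₁ : Z ⟶ X) (p₂ : Z ⟶ Y),
    i₁ ≫ p₁ = 𝟙 X ∧ i₂ ≫ p₂ = 𝟙 Y ∧ i₁ ≫ p₂ = 0 ∧ i₂ ≫ p₁ = 0 ∧
    p₁ ≫ i₁ + p₂ ≫ i₂ = 𝟙 Z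

/-- The extension `A * B` of two classes of objects. -/
def star (A B : Set C) : Set C :=
  {Z | ∃ (X Y : C) (f : X ⟶ Z) (g : Z ⟶ Y) (h : Y ⟶ (X⟦(1:ℤ)⟧ : C)),
      X ∈ A ∧ Y ∈ B ∧ Triangle.mk f g h ∈ distTriang C}

/-- Closure of a class of objects under finite direct sums and isomorphism. -/
inductive addClos (A : Set C) : C → Prop
  | of {X Y : C} (e : X ≅ Y) (hY : Y ∈ A) : addClos A X
  | zero {X : C} (hX : IsZero X) : addClos A X
  | dirSum {Z X Y : C} (hX : addClos A X) (hY : addClos A Y) (h : IsDirSum Z X Y) :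
      addClos A Z

/-- `coprodN A n` is `coprod_n (A)`; by convention `coprodN A 0` consists of zero objects. -/
def coprodN (A : Set C) : ℕ → Set C
  | 0 => {X | IsZero X}
  | 1 => setOf (addClos C A)
  | (n+2) => star C (setOf (addClos C A)) (coprodN A (n+1))

/-- Direct summands of objects in `A`. -/
def smd (A : Set C) : Set C := {X | ∃ (Z Y : C), Z ∈ A ∧ IsDirSum Z X Y}

/-- The class `G[I] = {G[-i] : i ∈ I}` (up to isomorphism). -/
def shiftsOf (G : C) (I : Set ℤ) : Set C :=
  {X | ∃ i ∈ I, Nonempty (X ≅ (G⟦(-i : ℤ)⟧ : C))}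

/-- `⟨G⟩ₙ^I := smd (coprodₙ (G[I]))`. -/
def genN (G : C) (I : Set ℤ) (n : ℕ) : Set C := smd C (coprodN C (shiftsOf C G I) n)

/-- `⟨G⟩^I := ⋃_{n > 0} ⟨G⟩ₙ^I`. -/
def gen (G : C) (I : Set ℤ) : Set C := {X | ∃ n : ℕ, X ∈ genN C G I (n+1)}

/-- The right orthogonal `G[I]^⊥`. -/
def rPerpShifts (G : C) (I : Set ℤ) : Set C :=
  {Y | ∀ i ∈ I, ∀ f : (G⟦(-i : ℤ)⟧ : C) ⟶ Y, f = 0}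

/-- `fd(𝒮, G) ≤ m` : `G(-∞,-1]^⊥ ⊆ ⟨G⟩^{[0,∞)}[m] = ⟨G⟩^{[-m,∞)}`. -/
def fdLE (G : C) (m : ℤ) : Prop :=
  ∀ X ∈ rPerpShifts C G (Set.Iic (-1)), X ∈ gen C G (Set.Ici (-m))

/-- `fd(𝒮ᵒᵖ, Gᵒᵖ) ≤ m`, expressed inside `𝒮`. -/
def fdOpLE (G : C) (m : ℤ) : Prop :=
  ∀ X : C, (∀ j : ℤ, j ≤ -1 → ∀ f : X ⟶ (G⟦j⟧ : C), f = 0) →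
    X ∈ gen C G (Set.Iic m)

/-- A t-structure on `C`, given by its aisle `le = 𝒮^{≤0}` and coaisle `ge = 𝒮^{≥0}`. -/
structure TStructure where
  le : Set C
  ge : Set C
  le_iso : ∀ ⦃X Y : C⦄, (X ≅ Y) → X ∈ le → Y ∈ le
  ge_iso : ∀ ⦃X Y : C⦄, (X ≅ Y) → X ∈ ge → Y ∈ ge
  le_shift : ∀ X ∈ le, (X⟦(1:ℤ)⟧ : C) ∈ le
  ge_shift : ∀ X ∈ ge, (X⟦(-1:ℤ)⟧ : C) ∈ ge
  hom_zero : ∀ X ∈ le, ∀ Y ∈ ge, ∀ f : (X⟦(1:ℤ)⟧ : C) ⟶ Y, f = 0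
  triangle : ∀ X : C, ∃ (A B : C) (_ : A ∈ le) (_ : B ∈ ge)
      (f : ((A⟦(1:ℤ)⟧ : C)) ⟶ X) (g : X ⟶ B) (h : B ⟶ ((A⟦(1:ℤ)⟧ : C)⟦(1:ℤ)⟧)),
      Triangle.mk f g h ∈ distTriang C

variable {C}

/-- bounded above: `𝒮 = ⋃ₙ 𝒮^{≤n}`. -/
def TStructure.BoundedAbove (T : TStructure C) : Prop :=
  ∀ X : C, ∃ n : ℕ, (X⟦(n : ℤ)⟧ : C) ∈ T.le

/-- bounded below: `𝒮 = ⋃ₙ 𝒮^{≥-n}`. -/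
def TStructure.BoundedBelow (T : TStructure C) : Prop :=
  ∀ X : C, ∃ n : ℕ, (X⟦(-(n : ℤ))⟧ : C) ∈ T.ge

/-- bounded t-structure. -/
def TStructure.Bounded (T : TStructure C) : Prop :=
  T.BoundedAbove ∧ T.BoundedBelow

/-- A good metric on `C`. -/
structure IsGoodMetric (M : ℕ → Set C) : Prop where
  zero_mem : ∀ n : ℕ, ∀ X : C, IsZero X → X ∈ M n
  ext : ∀ n : ℕ, star C (M n) (M n) ⊆ M n
  shift_neg : ∀ n : ℕ, ∀ X ∈ M (n+1), (X⟦(-1:ℤ)⟧ : C) ∈ M n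
  mono : ∀ n : ℕ, ∀ X ∈ M (n+1), X ∈ M n
  shift_pos : ∀ n : ℕ, ∀ X ∈ M (n+1), (X⟦(1:ℤ)⟧ : C) ∈ M n

variable (C)

/-- A chain of morphisms indexed by `ℕ`. -/
structure Chain where
  X : ℕ → C
  f : ∀ n : ℕ, X n ⟶ X (n+1)

/-- `Z` is a cone of `f : A ⟶ B`. -/
def IsConeOf {A B : C} (Z : C) (f : A ⟶ B) : Prop :=
  ∃ (g : B ⟶ Z) (h : Z ⟶ (A⟦(1:ℤ)⟧ : C)), Triangle.mk f g h ∈ distTriang C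

variable {C}

/-- Cauchy sequence with respect to a (good) metric `M`. -/
def Chain.IsCauchy (c : Chain C) (M : ℕ → Set C) : Prop :=
  ∀ i : ℕ, ∃ N : ℕ, ∀ j : ℕ, N ≤ j → ∃ Z : C, IsConeOf C Z (c.f j) ∧ Z ∈ M i

end Paper

/-!
Write `𝒲ₐ = G(-∞,a]^⊥`. By induction on `m`, every `Z ∈ coprod_{m+1}(G(-∞,∞))` admits a morphism
`χ : Z ⟶ Z'` with `Z' ∈ coprod_{m+1}(G[a+1-m(d+1),∞))` such that `Hom(Z', W) → Hom(Z, W)` is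
bijective for all `W ∈ 𝒲ₐ`. Given a triangle `X → Z → Y → X[1]`, split `X = X' ⊕ X''` with
`X' ∈ coprod_1(G(-∞,a])` and `X'' ∈ coprod_1(G[a+1,∞))`. Replacing `X` by `X''` does not change
`Hom(-, W)`, since `X'` and `X'[1]` have no maps to `W`. As `Hom(G[i], G) = 0` for `i > d`, the
object `X''[1]` lies in `𝒲_{a-d-1}`, so the connecting morphism `Y → X''[1]` factors through the
approximation `Y → Y'` for `𝒲_{a-d-1}`; replacing `Y` by `Y'` again does not change `Hom(-, W)`,
because `W` and `W[1]` lie in `𝒲_{a-d-1}`. Both replacements are instances of the five lemma for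
`Hom(-, W)`.

If `F ∈ 𝒲₋₁` is a summand of `Z`, the retraction `Z → F` factors through `Z'`, which exhibits `F`
as a summand of `Z'`.
-/

namespace Paper

open Preadditive

section Preadditive

variable {C : Type u} [Category.{v} C] [Preadditive C]

lemma IsDirSum.symm {Z X Y : C} (h : IsDirSum Z X Y) : IsDirSum Z Y X := by
  obtain ⟨i₁, i₂, p₁, p₂, h₁, h₂, h₃, h₄, h₅⟩ := h
  exact ⟨i₂, i₁, p₂, p₁, h₂, h₁, h₄, h₃, by rw [add_comm, h₅]⟩

lemma isDirSum_of_isZero {X O : C} (hO : IsZero O) : IsDirSum X X O :=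
  ⟨𝟙 X, 0, 𝟙 X, 0, by simp, hO.eq_of_src _ _, by simp, by simp, by simp⟩

lemma IsDirSum.map {D : Type*} [Category D] [Preadditive D] (F : C ⥤ D) [F.Additive]
    {Z X Y : C} (h : IsDirSum Z X Y) : IsDirSum (F.obj Z) (F.obj X) (F.obj Y) := by
  obtain ⟨i₁, i₂, p₁, p₂, h₁, h₂, h₃, h₄, h₅⟩ := h
  refine ⟨F.map i₁, F.map i₂, F.map p₁, F.map p₂, ?_, ?_, ?_, ?_, ?_⟩
  · rw [← F.map_comp, h₁, F.map_id]
  · rw [← F.map_comp, h₂, F.map_id]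
  · rw [← F.map_comp, h₃, F.map_zero]
  · rw [← F.map_comp, h₄, F.map_zero]
  · rw [← F.map_comp, ← F.map_comp, ← F.map_add, h₅, F.map_id]

lemma addClos.eq_zero_of_src {A : Set C} {W : C} (hA : ∀ Y ∈ A, ∀ f : Y ⟶ W, f = 0) {X : C}
    (hX : addClos C A X) (f : X ⟶ W) : f = 0 := by
  induction hX with
  | of e hY => rw [← e.hom_inv_id_assoc f, hA _ hY (e.inv ≫ f), Limits.comp_zero]
  | zero hX => exact hX.eq_of_src f 0
  | dirSum _ _ h ihX ihY =>
    obtain ⟨i₁, i₂, p₁, p₂, -, -, -, -, h₅⟩ := h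
    rw [← Category.id_comp f, ← h₅, add_comp, Category.assoc, Category.assoc, ihX (i₁ ≫ f),
      ihY (i₂ ≫ f), Limits.comp_zero, Limits.comp_zero, add_zero]

lemma addClos.eq_zero_of_tgt {A : Set C} {S : C} (hA : ∀ Y ∈ A, ∀ f : S ⟶ Y, f = 0) {X : C}
    (hX : addClos C A X) (f : S ⟶ X) : f = 0 := by
  induction hX with
  | of e hY => rw [← Category.comp_id f, ← e.hom_inv_id, ← Category.assoc, hA _ hY (f ≫ e.hom),
      Limits.zero_comp]
  | zero hX => exact hX.eq_of_tgt f 0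
  | dirSum _ _ h ihX ihY =>
    obtain ⟨i₁, i₂, p₁, p₂, -, -, -, -, h₅⟩ := h
    rw [← Category.comp_id f, ← h₅, comp_add, ← Category.assoc, ← Category.assoc, ihX (f ≫ p₁),
      ihY (f ≫ p₂), Limits.zero_comp, Limits.zero_comp, add_zero]

lemma addClos_map {D : Type*} [Category D] [Preadditive D] (F : C ⥤ D) [F.Additive]
    {A : Set C} {B : Set D} (hAB : ∀ Y ∈ A, F.obj Y ∈ B) {X : C} (hX : addClos C A X) :
    addClos D B (F.obj X) := by
  induction hX with
  | of e hY => exact .of (F.mapIso e) (hAB _ hY)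
  | zero h => exact .zero (F.map_isZero h)
  | dirSum _ _ h ihX ihY => exact .dirSum ihX ihY (h.map F)

lemma addClos_mono {A B : Set C} (hAB : A ⊆ B) {X : C} (hX : addClos C A X) : addClos C B X :=
  addClos_map (𝟭 C) hAB hX

@[simp]
lemma leftComp_apply {X Y W : C} (f : X ⟶ Y) (g : Y ⟶ W) : leftComp W f g = f ≫ g := rfl

lemma leftComp_comp_leftComp {P Q Q' R W : C} {a : P ⟶ Q} {b : Q ⟶ R} {c : P ⟶ Q'}
    {d : Q' ⟶ R} (h : a ≫ b = c ≫ d) :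
    (leftComp W a).comp (leftComp W b) = (leftComp W c).comp (leftComp W d) := by
  ext f
  simp [reassoc_of% h]

lemma bijective_leftComp_of_isIso {X Y : C} (W : C) (f : X ⟶ Y) [IsIso f] :
    Function.Bijective (leftComp W f) :=
  ⟨fun g g' h => (cancel_epi f).1 h, fun g => ⟨inv f ≫ g, by simp⟩⟩

lemma bijective_leftComp_map_snd {D : Type*} [Category D] [Preadditive D] (F : C ⥤ D)
    [F.Additive] {X X₁ X₂ : C} {W : D} {i₁ : X₁ ⟶ X} {i₂ : X₂ ⟶ X} {p₁ : X ⟶ X₁}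
    {p₂ : X ⟶ X₂} (h₂ : i₂ ≫ p₂ = 𝟙 X₂) (h : p₁ ≫ i₁ + p₂ ≫ i₂ = 𝟙 X)
    (hW : ∀ f : F.obj X₁ ⟶ W, f = 0) : Function.Bijective (leftComp W (F.map p₂)) := by
  refine ⟨fun g g' hg => ?_, fun g => ⟨F.map i₂ ≫ g, ?_⟩⟩
  · simpa [← F.map_comp_assoc, h₂] using congrArg (F.map i₂ ≫ ·) hg
  · have := congrArg (F.map · ≫ g) h
    simpa [hW (F.map i₁ ≫ g)] using this

end Preadditive

section Biproducts

open ZeroObject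

variable {C : Type u} [Category.{v} C] [Preadditive C] [HasBinaryBiproducts C]

lemma IsDirSum.of_iso {Z X Y : C} (e : Z ≅ X ⊞ Y) : IsDirSum Z X Y := by
  refine ⟨biprod.inl ≫ e.inv, biprod.inr ≫ e.inv, e.hom ≫ biprod.fst, e.hom ≫ biprod.snd,
    by simp, by simp, by simp, by simp, ?_⟩
  calc _ = e.hom ≫ (biprod.fst ≫ biprod.inl + biprod.snd ≫ biprod.inr) ≫ e.inv := by
        simp only [add_comp, comp_add, Category.assoc]
    _ = 𝟙 Z := by rw [biprod.total, Category.id_comp, e.hom_inv_id]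

lemma IsDirSum.nonempty_iso {Z X Y : C} (h : IsDirSum Z X Y) : Nonempty (Z ≅ X ⊞ Y) := by
  obtain ⟨i₁, i₂, p₁, p₂, h₁, h₂, h₃, h₄, h₅⟩ := h
  exact ⟨biprod.uniqueUpToIso X Y (b := ⟨Z, p₁, p₂, i₁, i₂, h₁, h₃, h₄, h₂⟩)
    (isBinaryBilimitOfTotal _ h₅)⟩

lemma IsDirSum.regroup {Z X Y X₁ X₂ Y₁ Y₂ : C} (h : IsDirSum Z X Y) (hX : IsDirSum X X₁ X₂)
    (hY : IsDirSum Y Y₁ Y₂) : IsDirSum Z (X₁ ⊞ Y₁) (X₂ ⊞ Y₂) := by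
  obtain ⟨e⟩ := h.nonempty_iso
  obtain ⟨eX⟩ := hX.nonempty_iso
  obtain ⟨eY⟩ := hY.nonempty_iso
  exact .of_iso (e ≪≫ biprod.mapIso eX eY ≪≫ biprod.associator _ _ _ ≪≫
    biprod.mapIso (Iso.refl _) ((biprod.associator _ _ _).symm ≪≫
      biprod.mapIso (biprod.braiding _ _) (Iso.refl _) ≪≫ biprod.associator _ _ _) ≪≫
    (biprod.associator _ _ _).symm)

lemma addClos.biprod {A : Set C} {X Y : C} (hX : addClos C A X) (hY : addClos C A Y) :
    addClos C A (X ⊞ Y) :=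
  .dirSum hX hY (.of_iso (Iso.refl _))

lemma addClos.exists_isDirSum_of_union [HasZeroObject C] {A B : Set C} {X : C}
    (hX : addClos C (A ∪ B) X) :
    ∃ X₁ X₂ : C, IsDirSum X X₁ X₂ ∧ addClos C A X₁ ∧ addClos C B X₂ := by
  induction hX with
  | of e hY =>
    rcases hY with hY | hY
    · exact ⟨_, 0, isDirSum_of_isZero (isZero_zero C), .of e hY, .zero (isZero_zero C)⟩
    · exact ⟨0, _, (isDirSum_of_isZero (isZero_zero C)).symm, .zero (isZero_zero C), .of e hY⟩
  | zero hX => exact ⟨_, _, isDirSum_of_isZero hX, .zero hX, .zero hX⟩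
  | dirSum _ _ h ihX ihY =>
    obtain ⟨X₁, X₂, hX, hX₁, hX₂⟩ := ihX
    obtain ⟨Y₁, Y₂, hY, hY₁, hY₂⟩ := ihY
    exact ⟨_, _, h.regroup hX hY, hX₁.biprod hY₁, hX₂.biprod hY₂⟩

end Biproducts

section Shifts

variable {C : Type u} [Category.{v} C] [HasShift C ℤ]

lemma shiftsOf_mono {G : C} {I J : Set ℤ} (hIJ : I ⊆ J) : shiftsOf C G I ⊆ shiftsOf C G J :=
  fun _ ⟨i, hi, he⟩ => ⟨i, hIJ hi, he⟩

lemma shift_mem_shiftsOf {G Y : C} {I J : Set ℤ} (n : ℤ) (hIJ : ∀ i ∈ I, i - n ∈ J)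
    (hY : Y ∈ shiftsOf C G I) : Y⟦n⟧ ∈ shiftsOf C G J := by
  obtain ⟨i, hi, ⟨e⟩⟩ := hY
  exact ⟨i - n, hIJ i hi, ⟨(shiftFunctor C n).mapIso e ≪≫
    ((shiftFunctorAdd' C (-i) n (-(i - n)) (by ring)).app G).symm⟩⟩

variable [Preadditive C]

lemma rPerpShifts_anti {G : C} {I J : Set ℤ} (hIJ : I ⊆ J) :
    rPerpShifts C G J ⊆ rPerpShifts C G I :=
  fun _ hW i hi => hW i (hIJ hi)

lemma addClos.eq_zero_of_rPerpShifts {G X W : C} {I : Set ℤ}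
    (hX : addClos C (shiftsOf C G I) X) (hW : W ∈ rPerpShifts C G I) (f : X ⟶ W) : f = 0 := by
  refine hX.eq_zero_of_src (fun Y hY g => ?_) f
  obtain ⟨i, hi, ⟨e⟩⟩ := hY
  rw [← e.hom_inv_id_assoc g, hW i hi (e.inv ≫ g), Limits.comp_zero]

lemma addClos.exists_isDirSum_Iic_Ici [HasZeroObject C] [HasBinaryBiproducts C] {G X : C}
    (a : ℤ) (hX : addClos C (shiftsOf C G Set.univ) X) :
    ∃ X₁ X₂ : C, IsDirSum X X₁ X₂ ∧ addClos C (shiftsOf C G (Set.Iic a)) X₁ ∧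
      addClos C (shiftsOf C G (Set.Ici (a + 1))) X₂ := by
  refine (addClos_mono (fun Y hY => ?_) hX).exists_isDirSum_of_union
  obtain ⟨i, -, he⟩ := hY
  exact (le_or_gt i a).imp (fun hi => ⟨i, hi, he⟩) (fun hi => ⟨i, Set.mem_Ici.2 (by omega), he⟩)

variable [∀ n : ℤ, (shiftFunctor C n).Additive]

lemma addClos_shiftsOf_shift_one {G X : C} {I J : Set ℤ} (hIJ : ∀ i ∈ I, i - 1 ∈ J)
    (hX : addClos C (shiftsOf C G I) X) : addClos C (shiftsOf C G J) (X⟦(1 : ℤ)⟧) :=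
  addClos_map _ (fun _ => shift_mem_shiftsOf 1 hIJ) hX

lemma eq_zero_of_shift {A B A' B' : C} (n : ℤ) (eA : A' ≅ A⟦n⟧) (eB : B⟦n⟧ ≅ B')
    (h : ∀ g : A' ⟶ B', g = 0) (f : A ⟶ B) : f = 0 := by
  have := h (eA.hom ≫ f⟦n⟧' ≫ eB.hom)
  rwa [IsIso.comp_left_eq_zero, IsIso.comp_right_eq_zero, Functor.map_eq_zero_iff] at this

lemma shift_hom_eq_zero {G : C} {d : ℕ}
    (hd : ∀ i : ℤ, (d : ℤ) + 1 ≤ i → ∀ f : (G⟦i⟧ : C) ⟶ G, f = 0) {i k : ℤ} (hik : i + d + 1 ≤ k)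
    (f : (G⟦-i⟧ : C) ⟶ G⟦-k⟧) : f = 0 :=
  eq_zero_of_shift k ((shiftFunctorAdd' C (-i) k (k - i) (by ring)).app G)
    ((shiftFunctorCompIsoId C (-k) k (by ring)).app G) (hd _ (by omega)) f

lemma shift_mem_rPerpShifts {G W : C} {a : ℤ} (n : ℤ) (hW : W ∈ rPerpShifts C G (Set.Iic a)) :
    W⟦n⟧ ∈ rPerpShifts C G (Set.Iic (a - n)) := fun i hi =>
  eq_zero_of_shift (-n) ((shiftFunctorAdd' C (-i) (-n) (-(i + n)) (by ring)).app G)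
    ((shiftFunctorCompIsoId C n (-n) (by ring)).app W)
    (hW (i + n) (by simp only [Set.mem_Iic] at hi ⊢; omega))

lemma addClos.mem_rPerpShifts {G X : C} {d : ℕ}
    (hd : ∀ i : ℤ, (d : ℤ) + 1 ≤ i → ∀ f : (G⟦i⟧ : C) ⟶ G, f = 0) {a : ℤ}
    (hX : addClos C (shiftsOf C G (Set.Ici a)) X) :
    X ∈ rPerpShifts C G (Set.Iic (a - d - 1)) := by
  refine fun i hi => hX.eq_zero_of_tgt (fun Y hY g => ?_)
  obtain ⟨k, hk, ⟨e⟩⟩ := hY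
  simp only [Set.mem_Iic, Set.mem_Ici] at hi hk
  rw [← Category.comp_id g, ← e.hom_inv_id, ← Category.assoc,
    shift_hom_eq_zero hd (by omega) (g ≫ e.hom), Limits.zero_comp]

lemma injective_leftComp_shift_neg_one {Y Y' W : C} (f : Y ⟶ Y')
    (hf : Function.Injective (leftComp (W⟦(1 : ℤ)⟧) f)) :
    Function.Injective (leftComp W (f⟦(-1 : ℤ)⟧')) := by
  rw [injective_iff_map_eq_zero] at hf ⊢
  intro g hg
  let e := (shiftFunctorCompIsoId C (1 : ℤ) (-1) (by ring)).app W
  obtain ⟨h, hh⟩ := (shiftFunctor C (-1)).map_surjective (g ≫ e.inv)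
  have hfh : f ≫ h = 0 := by
    rw [← Functor.map_eq_zero_iff (shiftFunctor C (-1)), Functor.map_comp, hh, ← Category.assoc]
    exact (congrArg (· ≫ e.inv) hg).trans (Limits.zero_comp)
  rwa [hf h hfh, Functor.map_zero, eq_comm, IsIso.comp_right_eq_zero] at hh

end Shifts

section Pretriangulated

variable {C : Type u} [Category.{v} C] [HasZeroObject C] [HasShift C ℤ] [Preadditive C]
  [∀ n : ℤ, (shiftFunctor C n).Additive] [Pretriangulated C]

lemma mem_smd_of_retraction {A : Set C} {X Z : C} (hZ : Z ∈ A) (f : X ⟶ Z) (r : Z ⟶ X)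
    (hfr : f ≫ r = 𝟙 X) : X ∈ smd C A := by
  obtain ⟨Y, g, h, hT⟩ := distinguished_cocone_triangle f
  have : IsSplitMono f := .mk' ⟨r, hfr⟩
  obtain ⟨e, -⟩ := exists_iso_binaryBiproduct_of_distTriang _ hT
    (Triangle.mor₃_eq_zero_of_mono₁ _ hT (inferInstanceAs (Mono f)))
  exact ⟨Z, Y, hZ, .of_iso e⟩

lemma exact_leftComp_mor₂_mor₁ {T : Triangle C} (hT : T ∈ distTriang C) (W : C) :
    Function.Exact (leftComp W T.mor₂) (leftComp W T.mor₁) := fun f =>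
  ⟨fun hf => (Triangle.yoneda_exact₂ T hT f hf).imp fun _ hg => hg.symm,
    by rintro ⟨g, rfl⟩; simp [comp_distTriang_mor_zero₁₂_assoc T hT]⟩

/-- The five lemma for the cohomological functor `Hom(-, W)`. -/
lemma bijective_leftComp_hom₂ {T T' : Triangle C} (hT : T ∈ distTriang C)
    (hT' : T' ∈ distTriang C) (φ : T ⟶ T') (W : C)
    (h₁ : Function.Surjective (leftComp W (φ.hom₁⟦(1 : ℤ)⟧')))
    (h₃ : Function.Bijective (leftComp W φ.hom₃))
    (h₁' : Function.Bijective (leftComp W φ.hom₁))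
    (h₃' : Function.Injective (leftComp W (φ.hom₃⟦(-1 : ℤ)⟧'))) :
    Function.Bijective (leftComp W φ.hom₂) :=
  AddMonoidHom.bijective_of_surjective_of_bijective_of_bijective_of_injective _ _ _ _ _ _ _ _
    _ _ _ _ _ (leftComp_comp_leftComp φ.comm₃) (leftComp_comp_leftComp φ.comm₂)
    (leftComp_comp_leftComp φ.comm₁) (leftComp_comp_leftComp ((invRotate C).map φ).comm₁)
    (exact_leftComp_mor₂_mor₁ (rot_of_distTriang _ hT') W) (exact_leftComp_mor₂_mor₁ hT' W)
    (exact_leftComp_mor₂_mor₁ (inv_rot_of_distTriang _ hT') W)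
    (exact_leftComp_mor₂_mor₁ (rot_of_distTriang _ hT) W) (exact_leftComp_mor₂_mor₁ hT W)
    (exact_leftComp_mor₂_mor₁ (inv_rot_of_distTriang _ hT) W) h₁ h₃ h₁' h₃'

lemma exists_distTriang_bijective_leftComp {X Z Y X' Y' : C} {f : X ⟶ Z} {g : Z ⟶ Y}
    {h : Y ⟶ X⟦(1 : ℤ)⟧} (hT : Triangle.mk f g h ∈ distTriang C) (u₁ : X ⟶ X') (u₃ : Y ⟶ Y')
    (v : Y' ⟶ X'⟦(1 : ℤ)⟧) (hv : h ≫ u₁⟦(1 : ℤ)⟧' = u₃ ≫ v) :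
    ∃ (Z' : C) (f' : X' ⟶ Z') (g' : Z' ⟶ Y') (u₂ : Z ⟶ Z'),
      Triangle.mk f' g' v ∈ distTriang C ∧ ∀ W : C,
        Function.Surjective (leftComp W (u₁⟦(1 : ℤ)⟧')) →
        Function.Bijective (leftComp W u₃) → Function.Bijective (leftComp W u₁) →
        Function.Injective (leftComp W (u₃⟦(-1 : ℤ)⟧')) → Function.Bijective (leftComp W u₂) := by
  obtain ⟨Z', f', g', hT'⟩ := distinguished_cocone_triangle₂ v
  obtain ⟨u₂, h₁, h₂⟩ := complete_distinguished_triangle_morphism₂ _ _ hT hT' u₁ u₃ hv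
  exact ⟨Z', f', g', u₂, hT',
    bijective_leftComp_hom₂ hT hT' (Triangle.homMk _ _ u₁ u₂ u₃ h₁ h₂ hv)⟩

lemma exists_distTriang_bijective_leftComp_of_isDirSum {X Z Y X₁ X₂ : C} {f : X ⟶ Z}
    {g : Z ⟶ Y} {h : Y ⟶ X⟦(1 : ℤ)⟧} (hT : Triangle.mk f g h ∈ distTriang C) {i₁ : X₁ ⟶ X}
    {i₂ : X₂ ⟶ X} {p₁ : X ⟶ X₁} {p₂ : X ⟶ X₂} (h₂ : i₂ ≫ p₂ = 𝟙 X₂)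
    (hX : p₁ ≫ i₁ + p₂ ≫ i₂ = 𝟙 X) :
    ∃ (Z₁ : C) (f₁ : X₂ ⟶ Z₁) (g₁ : Z₁ ⟶ Y) (χ : Z ⟶ Z₁),
      Triangle.mk f₁ g₁ (h ≫ p₂⟦(1 : ℤ)⟧') ∈ distTriang C ∧ ∀ W : C,
        (∀ φ : X₁ ⟶ W, φ = 0) → (∀ φ : X₁⟦(1 : ℤ)⟧ ⟶ W, φ = 0) →
        Function.Bijective (leftComp W χ) := by
  obtain ⟨Z₁, f₁, g₁, χ, hT₁, hχ⟩ :=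
    exists_distTriang_bijective_leftComp hT p₂ (𝟙 Y) (h ≫ p₂⟦(1 : ℤ)⟧') (Category.id_comp _).symm
  exact ⟨Z₁, f₁, g₁, χ, hT₁, fun W hW hW₁ =>
    hχ W (bijective_leftComp_map_snd _ h₂ hX hW₁).2 (bijective_leftComp_of_isIso _ _)
      (bijective_leftComp_map_snd (𝟭 C) h₂ hX hW) (bijective_leftComp_of_isIso _ _).1⟩

lemma exists_distTriang_bijective_leftComp_of_factor {X Z Y Y' : C} {f : X ⟶ Z} {g : Z ⟶ Y}
    {h : Y ⟶ X⟦(1 : ℤ)⟧} (hT : Triangle.mk f g h ∈ distTriang C) (χ : Y ⟶ Y')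
    (v : Y' ⟶ X⟦(1 : ℤ)⟧) (hv : χ ≫ v = h) :
    ∃ (Z' : C) (f' : X ⟶ Z') (g' : Z' ⟶ Y') (ξ : Z ⟶ Z'),
      Triangle.mk f' g' v ∈ distTriang C ∧ ∀ W : C, Function.Bijective (leftComp W χ) →
        Function.Injective (leftComp (W⟦(1 : ℤ)⟧) χ) → Function.Bijective (leftComp W ξ) := by
  obtain ⟨Z', f', g', ξ, hT', hξ⟩ :=
    exists_distTriang_bijective_leftComp hT (𝟙 X) χ v (by simpa using hv.symm)
  exact ⟨Z', f', g', ξ, hT', fun W hW hW₁ => hξ W (bijective_leftComp_of_isIso _ _).2 hW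
    (bijective_leftComp_of_isIso _ _) (injective_leftComp_shift_neg_one χ hW₁)⟩

theorem exists_bijective_leftComp_of_mem_coprodN {G : C} {d : ℕ}
    (hd : ∀ i : ℤ, (d : ℤ) + 1 ≤ i → ∀ f : (G⟦i⟧ : C) ⟶ G, f = 0) (m : ℕ) (a : ℤ) {Z : C}
    (hZ : Z ∈ coprodN C (shiftsOf C G Set.univ) (m + 1)) :
    ∃ Z' ∈ coprodN C (shiftsOf C G (Set.Ici (a + 1 - m * (d + 1)))) (m + 1), ∃ χ : Z ⟶ Z',
      ∀ W ∈ rPerpShifts C G (Set.Iic a), Function.Bijective (leftComp W χ) := by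
  induction m generalizing a Z with
  | zero =>
    obtain ⟨X₁, X₂, ⟨i₁, i₂, p₁, p₂, -, h₂, -, -, h⟩, hX₁, hX₂⟩ := hZ.exists_isDirSum_Iic_Ici a
    exact ⟨X₂, by rw [Nat.cast_zero, zero_mul, sub_zero]; exact hX₂, p₂, fun W hW =>
      bijective_leftComp_map_snd (𝟭 C) h₂ h (hX₁.eq_zero_of_rPerpShifts hW)⟩
  | succ m ih =>
    obtain ⟨X, Y, f, g, h, hX, hY, hT⟩ := hZ
    obtain ⟨X₁, X₂, ⟨i₁, i₂, p₁, p₂, -, h₂, -, -, hX₁₂⟩, hX₁, hX₂⟩ := hX.exists_isDirSum_Iic_Ici a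
    obtain ⟨Z₁, f₁, g₁, χ₁, hT₁, hχ₁⟩ :=
      exists_distTriang_bijective_leftComp_of_isDirSum hT h₂ hX₁₂
    obtain ⟨Y', hY', χ₂, hχ₂⟩ := ih (a - d - 1) hY
    have hX₂' : X₂⟦(1 : ℤ)⟧ ∈ rPerpShifts C G (Set.Iic (a - d - 1)) :=
      (addClos_shiftsOf_shift_one (fun i hi => by simp only [Set.mem_Ici] at hi ⊢; omega)
        hX₂).mem_rPerpShifts hd
    obtain ⟨v, hv⟩ := (hχ₂ _ hX₂').2 (h ≫ p₂⟦(1 : ℤ)⟧')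
    obtain ⟨Z', f', g', ξ, hT', hξ⟩ := exists_distTriang_bijective_leftComp_of_factor hT₁ χ₂ v hv
    refine ⟨Z', ⟨X₂, Y', f', g', v, addClos_mono (shiftsOf_mono (Set.Ici_subset_Ici.2 ?_)) hX₂,
      ?_, hT'⟩, χ₁ ≫ ξ, fun W hW => ?_⟩
    · push_cast
      nlinarith
    · convert hY' using 4
      push_cast
      ring
    have hχ₁W := hχ₁ W (hX₁.eq_zero_of_rPerpShifts hW)
      ((addClos_shiftsOf_shift_one (fun i hi => by simp only [Set.mem_Iic] at hi ⊢; omega)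
        hX₁).eq_zero_of_rPerpShifts hW)
    have hξW := hξ W (hχ₂ W (rPerpShifts_anti (Set.Iic_subset_Iic.2 (by omega)) hW))
      (hχ₂ _ (rPerpShifts_anti (Set.Iic_subset_Iic.2 (by omega)) (shift_mem_rPerpShifts 1 hW))).1
    have hcomp : ⇑(leftComp W (χ₁ ≫ ξ)) = leftComp W χ₁ ∘ leftComp W ξ :=
      funext fun _ => Category.assoc _ _ _
    exact hcomp ▸ hχ₁W.comp hξW

end Pretriangulated

/-- If `𝒮 = ⟨G⟩_{n+1}` (so `G` is a strong generator) and
`Hom(G[i], G) = 0` for all `i ≥ d + 1`, then `fd(𝒮, G) ≤ n(d+1) < ∞`: every `F` with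
`Hom(G[j], F) = 0` for all `j ≥ 1` lies in `⟨G⟩_{n+1}^{[-n(d+1),∞)} ⊆ ⟨G⟩^{[0,∞)}[n(d+1)]`. -/
theorem fd_le_of_strong_generator
    (C : Type u) [Category.{v} C] [HasZeroObject C] [HasShift C ℤ]
    [Preadditive C] [∀ n : ℤ, (shiftFunctor C n).Additive] [Pretriangulated C]
    (G : C) (n d : ℕ)
    (hstrong : ∀ X : C, X ∈ genN C G Set.univ (n+1))
    (hd : ∀ i : ℤ, (d : ℤ) + 1 ≤ i → ∀ f : (G⟦i⟧ : C) ⟶ G, f = 0) :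
    (∀ F ∈ rPerpShifts C G (Set.Iic (-1)),
      F ∈ genN C G (Set.Ici (-((n : ℤ) * ((d : ℤ) + 1)))) (n+1)) ∧
    fdLE C G ((n : ℤ) * ((d : ℤ) + 1)) := by
  have main : ∀ F ∈ rPerpShifts C G (Set.Iic (-1)),
      F ∈ genN C G (Set.Ici (-((n : ℤ) * ((d : ℤ) + 1)))) (n+1) := by
    intro F hF
    obtain ⟨Z, -, hZ, i, -, p, -, hip, -⟩ := hstrong F
    obtain ⟨Z', hZ', χ, hχ⟩ := exists_bijective_leftComp_of_mem_coprodN hd n (-1) hZ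
    obtain ⟨r, hr⟩ := (hχ F hF).2 p
    refine mem_smd_of_retraction (by simpa using hZ') (i ≫ χ) r ?_
    rw [leftComp_apply] at hr
    rw [Category.assoc, hr, hip]
  exact ⟨main, fun F hF => ⟨n, main F hF⟩⟩

end Paper
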